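/- For cochain maps f : C → D and g : D → C of R-module cochain complexes, the mapping 1-tori T(fg) and T(gf) are chain homotopy equivalent as R[z,z^{-1}]-module cochain complexes (the Mather trick). -/

import Mathlib

open scoped TensorProduct

noncomputable section

variable (R : Type) [CommRing R]

/-- The Laurent polynomial ring `R[z,z⁻¹]`. -/
abbrev L := LaurentPolynomial R

/-- The indeterminate `z ∈ R[z,z⁻¹]`. -/
noncomputable def zvar : L R := LaurentPolynomial.T 1

variable (C : ℤ → Type) [∀ n, AddCommGroup (C n)] [∀ n, Module R (C n)]

/-- The `n`-th term of the mapping 1-torus of a self map of `C`: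
the cone of `h ⊗ id − id ⊗ z` on `C ⊗_R R[z,z⁻¹]` (Laurent factor written on the left). -/
def torusX (n : ℤ) : Type := (L R ⊗[R] C (n + 1)) × (L R ⊗[R] C n)

instance (n : ℤ) : AddCommGroup (torusX R C n) := by unfold torusX; infer_instance
instance (n : ℤ) : Module (L R) (torusX R C n) := by unfold torusX; infer_instance

/-- The differential of the mapping 1-torus `T(h)`:
`(x, y) ↦ (−(d⊗id) x, (h⊗id − id⊗z) x + (d⊗id) y)`. -/
def torusD (dC : ∀ n, C n →ₗ[R] C (n + 1)) (h : ∀ n, C n →ₗ[R] C n) (n : ℤ) :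
    torusX R C n →ₗ[L R] torusX R C (n + 1) :=
  LinearMap.prod
    (-((LinearMap.baseChange (L R) (dC (n + 1))).comp
        (LinearMap.fst (L R) (L R ⊗[R] C (n + 1)) (L R ⊗[R] C n))))
    (((LinearMap.baseChange (L R) (h (n + 1))
        - LinearMap.lsmul (L R) (L R ⊗[R] C (n + 1)) (zvar R)).comp
        (LinearMap.fst (L R) (L R ⊗[R] C (n + 1)) (L R ⊗[R] C n)))
      + ((LinearMap.baseChange (L R) (dC n)).comp
        (LinearMap.snd (L R) (L R ⊗[R] C (n + 1)) (L R ⊗[R] C n))))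

/-!
Base change of `f` is a chain map `T(g ∘ f) → T(f ∘ g)` and `z⁻¹` times base change of `g` is one
back, because `f ∘ (g ∘ f) = (f ∘ g) ∘ f`. Both composites are `z⁻¹ (h ⊗ 1)` on a torus `T(h)`,
and `z⁻¹ (h ⊗ 1) - 1` is null-homotopic there via `(x, y) ↦ (z⁻¹ y, 0)`: since the cone
differential contains `h ⊗ 1 - z`, this homotopy gives `d s + s d = z⁻¹ (h ⊗ 1 - z)`.
-/

theorem LinearMap.baseChange_apply_apply_of_comm {R A M N N' P : Type*} [CommSemiring R]
    [Semiring A] [Algebra R A] [AddCommMonoid M] [AddCommMonoid N] [AddCommMonoid N']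
    [AddCommMonoid P] [Module R M] [Module R N] [Module R N'] [Module R P]
    {u : M →ₗ[R] N} {v : N →ₗ[R] P} {u' : M →ₗ[R] N'} {v' : N' →ₗ[R] P}
    (h : ∀ x, v (u x) = v' (u' x)) (t : A ⊗[R] M) :
    v.baseChange A (u.baseChange A t) = v'.baseChange A (u'.baseChange A t) := by
  have hcomp : v ∘ₗ u = v' ∘ₗ u' := LinearMap.ext h
  simpa only [LinearMap.baseChange_comp, LinearMap.comp_apply] using
    congrArg (fun φ => φ.baseChange A t) hcomp

theorem T_neg_one_smul_zvar_smul {M : Type*} [MulAction (L R) M] (x : M) :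
    (LaurentPolynomial.T (-1) : L R) • zvar R • x = x := by
  rw [zvar, smul_smul, ← LaurentPolynomial.T_add, neg_add_cancel, LaurentPolynomial.T_zero,
    one_smul]

variable {R C} in
/-- An anonymous pair `(x, y)` has a product type, which `rw` and `simp` do not identify with
`torusX`; pairs built with `torusX.mk` keep the type `torusX`, so lemmas about its operations
apply to them. -/
def torusX.mk {n : ℤ} (x : L R ⊗[R] C (n + 1)) (y : L R ⊗[R] C n) : torusX R C n :=
  (x, y)

theorem torusD_mk (dC : ∀ n, C n →ₗ[R] C (n + 1)) (h : ∀ n, C n →ₗ[R] C n) (n : ℤ)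
    (x : L R ⊗[R] C (n + 1)) (y : L R ⊗[R] C n) :
    torusD R C dC h n (.mk x y) =
      .mk (-(dC (n + 1)).baseChange (L R) x)
        ((h (n + 1)).baseChange (L R) x - zvar R • x + (dC n).baseChange (L R) y) :=
  rfl

namespace torusX

variable {R C}

section

variable {n : ℤ}

theorem mk_fst_snd (x : torusX R C n) : mk x.1 x.2 = x :=
  rfl

theorem mk_inj {x x' : L R ⊗[R] C (n + 1)} {y y' : L R ⊗[R] C n} :
    mk x y = mk x' y' ↔ x = x' ∧ y = y' :=
  Prod.mk_inj

theorem mk_add_mk (x x' : L R ⊗[R] C (n + 1)) (y y' : L R ⊗[R] C n) :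
    mk x y + mk x' y' = mk (x + x') (y + y') :=
  rfl

theorem mk_sub_mk (x x' : L R ⊗[R] C (n + 1)) (y y' : L R ⊗[R] C n) :
    mk x y - mk x' y' = mk (x - x') (y - y') :=
  rfl

theorem smul_mk (c : L R) (x : L R ⊗[R] C (n + 1)) (y : L R ⊗[R] C n) :
    c • mk x y = mk (c • x) (c • y) :=
  rfl

end

variable {D E : ℤ → Type} [∀ n, AddCommGroup (D n)] [∀ n, Module R (D n)]
  [∀ n, AddCommGroup (E n)] [∀ n, Module R (E n)]

variable (R) in
def map (f : ∀ n, C n →ₗ[R] D n) (n : ℤ) : torusX R C n →ₗ[L R] torusX R D n :=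
  (f (n + 1)).baseChange (L R) |>.prodMap ((f n).baseChange (L R))

theorem map_mk (f : ∀ n, C n →ₗ[R] D n) (n : ℤ)
    (x : L R ⊗[R] C (n + 1)) (y : L R ⊗[R] C n) :
    map R f n (.mk x y) = .mk ((f (n + 1)).baseChange (L R) x) ((f n).baseChange (L R) y) :=
  rfl

theorem map_map (f : ∀ n, C n →ₗ[R] D n) (g : ∀ n, D n →ₗ[R] E n) (n : ℤ)
    (x : torusX R C n) :
    map R g n (map R f n x) = map R (fun m => g m ∘ₗ f m) n x := by
  rw [← mk_fst_snd x]
  simp only [map_mk, LinearMap.baseChange_comp, LinearMap.comp_apply]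

theorem map_torusD {dC : ∀ n, C n →ₗ[R] C (n + 1)} {dD : ∀ n, D n →ₗ[R] D (n + 1)}
    {hC : ∀ n, C n →ₗ[R] C n} {hD : ∀ n, D n →ₗ[R] D n} {f : ∀ n, C n →ₗ[R] D n}
    (hfd : ∀ n x, f (n + 1) (dC n x) = dD n (f n x))
    (hfh : ∀ n x, f n (hC n x) = hD n (f n x)) (n : ℤ) (x : torusX R C n) :
    map R f (n + 1) (torusD R C dC hC n x) = torusD R D dD hD n (map R f n x) := by
  rw [← mk_fst_snd x]
  have hfd' := fun n => LinearMap.baseChange_apply_apply_of_comm (A := L R) (hfd n)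
  have hfh' := fun n => LinearMap.baseChange_apply_apply_of_comm (A := L R) (hfh n)
  simp only [torusD_mk, map_mk, map_neg, map_add, map_sub, map_smul, hfd', hfh']

theorem smul_map_torusD {dC : ∀ n, C n →ₗ[R] C (n + 1)} {dD : ∀ n, D n →ₗ[R] D (n + 1)}
    {hC : ∀ n, C n →ₗ[R] C n} {hD : ∀ n, D n →ₗ[R] D n} {f : ∀ n, C n →ₗ[R] D n}
    (hfd : ∀ n x, f (n + 1) (dC n x) = dD n (f n x))
    (hfh : ∀ n x, f n (hC n x) = hD n (f n x)) (c : L R) (n : ℤ) (x : torusX R C n) :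
    (c • map R f (n + 1)) (torusD R C dC hC n x) =
      torusD R D dD hD n ((c • map R f n) x) := by
  rw [LinearMap.smul_apply, LinearMap.smul_apply, map_smul, map_torusD hfd hfh]

end torusX

def torusHomotopy (n : ℤ) : torusX R C (n + 1) →ₗ[L R] torusX R C n :=
  ((LaurentPolynomial.T (-1) : L R) • LinearMap.snd (L R) _ _).prod 0

theorem torusHomotopy_mk (n : ℤ) (x : L R ⊗[R] C (n + 1 + 1)) (y : L R ⊗[R] C (n + 1)) :
    torusHomotopy R C n (.mk x y) = .mk ((LaurentPolynomial.T (-1) : L R) • y) 0 :=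
  rfl

theorem torusD_torusHomotopy_add (dC : ∀ n, C n →ₗ[R] C (n + 1)) (h : ∀ n, C n →ₗ[R] C n)
    (n : ℤ) (x : torusX R C (n + 1)) :
    torusD R C dC h n (torusHomotopy R C n x) +
        torusHomotopy R C (n + 1) (torusD R C dC h (n + 1) x) =
      (LaurentPolynomial.T (-1) : L R) • torusX.map R h (n + 1) x - x := by
  rw [← torusX.mk_fst_snd x]
  simp only [torusD_mk, torusHomotopy_mk, torusX.map_mk, torusX.mk_add_mk,
    torusX.smul_mk, torusX.mk_sub_mk, torusX.mk_inj, map_smul, map_zero, smul_add, smul_sub,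
    smul_comm (zvar R), T_neg_one_smul_zvar_smul]
  constructor <;> abel

theorem mappingOneTorus_mather_trick
    (D : ℤ → Type) [∀ n, AddCommGroup (D n)] [∀ n, Module R (D n)]
    (dC : ∀ n, C n →ₗ[R] C (n + 1)) (dD : ∀ n, D n →ₗ[R] D (n + 1))
    (f : ∀ n, C n →ₗ[R] D n) (g : ∀ n, D n →ₗ[R] C n)
    (hf : ∀ n (x : C n), f (n + 1) (dC n x) = dD n (f n x))
    (hg : ∀ n (x : D n), g (n + 1) (dD n x) = dC n (g n x)) :
    ∃ (φ : ∀ n, torusX R C n →ₗ[L R] torusX R D n)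
      (ψ : ∀ n, torusX R D n →ₗ[L R] torusX R C n)
      (s : ∀ n, torusX R C (n + 1) →ₗ[L R] torusX R C n)
      (t : ∀ n, torusX R D (n + 1) →ₗ[L R] torusX R D n),
      -- `φ` and `ψ` are chain maps between `T(g∘f)` and `T(f∘g)`:
      (∀ n (x : torusX R C n),
        φ (n + 1) (torusD R C dC (fun m => (g m).comp (f m)) n x)
          = torusD R D dD (fun m => (f m).comp (g m)) n (φ n x)) ∧
      (∀ n (y : torusX R D n),
        ψ (n + 1) (torusD R D dD (fun m => (f m).comp (g m)) n y)
          = torusD R C dC (fun m => (g m).comp (f m)) n (ψ n y)) ∧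
      -- `s` is a homotopy from `ψ ∘ φ` to the identity:
      (∀ n (x : torusX R C (n + 1)),
        ψ (n + 1) (φ (n + 1) x) - x
          = torusD R C dC (fun m => (g m).comp (f m)) n (s n x)
            + s (n + 1) (torusD R C dC (fun m => (g m).comp (f m)) (n + 1) x)) ∧
      -- `t` is a homotopy from `φ ∘ ψ` to the identity:
      (∀ n (y : torusX R D (n + 1)),
        φ (n + 1) (ψ (n + 1) y) - y
          = torusD R D dD (fun m => (f m).comp (g m)) n (t n y)
            + t (n + 1) (torusD R D dD (fun m => (f m).comp (g m)) (n + 1) y)) := by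
  refine ⟨torusX.map R f, fun n => (LaurentPolynomial.T (-1) : L R) • torusX.map R g n,
    torusHomotopy R C, torusHomotopy R D, torusX.map_torusD hf (fun _ _ => rfl),
    torusX.smul_map_torusD hg (fun _ _ => rfl) _, fun n x => ?_, fun n y => ?_⟩
  · rw [LinearMap.smul_apply, torusX.map_map, torusD_torusHomotopy_add]
  · rw [LinearMap.smul_apply, map_smul, torusX.map_map, torusD_torusHomotopy_add]

end
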